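/- arXiv:1808.00883 — 15 statements merged into one kernel-verified Lean document; each statement's English description precedes it below -/
import Mathlib

section
/- A finite direct sum of R-modules is Q-copure Baer injective if and only if each summand is Q-copure Baer injective. -/
universe u

variable {R : Type u}

/-- A linear map `f : A → B` is `Q`-copure if every module in `Q` is injective
relative to `f`. -/
def IsCopure [Ring R] (Q : ModuleCat.{u} R → Prop) {A B : Type u}
    [AddCommGroup A] [Module R A] [AddCommGroup B] [Module R B] (f : A →ₗ[R] B) : Prop :=
  ∀ M : ModuleCat.{u} R, Q M → ∀ g : A →ₗ[R] M, ∃ h : B →ₗ[R] M, ∀ a : A, h (f a) = g a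

/-- A left ideal `I` of `R` is `Q`-copure if every module in `Q` is injective
relative to the inclusion `I → R`. -/
def CopureIdeal [Ring R] (Q : ModuleCat.{u} R → Prop) (I : Ideal R) : Prop :=
  ∀ M : ModuleCat.{u} R, Q M → ∀ g : I →ₗ[R] M, ∃ h : R →ₗ[R] M, ∀ x : I, h x = g x

/-- `N` is `Q`-copure Baer injective if every homomorphism from a `Q`-copure
left ideal of `R` into `N` extends to `R`. -/
def CopureBaerInjective [Ring R] (Q : ModuleCat.{u} R → Prop) (N : Type*)
    [AddCommGroup N] [Module R N] : Prop :=
  ∀ I : Ideal R, CopureIdeal Q I → ∀ g : I →ₗ[R] N, ∃ h : R →ₗ[R] N, ∀ x : I, h x = g x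

theorem directSum_copureBaerInjective_iff [Ring R] (Q : ModuleCat.{u} R → Prop)
    (ι : Type*) [Fintype ι] [DecidableEq ι] (M : ι → Type*)
    [∀ i, AddCommGroup (M i)] [∀ i, Module R (M i)] :
    CopureBaerInjective Q (DirectSum ι M) ↔ ∀ i, CopureBaerInjective Q (M i) := by
  constructor
  · intro H i I hI g
    obtain ⟨h, hh⟩ := H I hI ((DirectSum.lof R ι M i).comp g)
    exact ⟨(DirectSum.component R ι M i).comp h, fun x => by
      simpa using congrArg (DirectSum.component R ι M i) (hh x)⟩
  · intro H I hI g
    choose h hh using fun i => H i I hI ((DirectSum.component R ι M i).comp g)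
    refine ⟨∑ i, (DirectSum.lof R ι M i).comp (h i), fun x => ?_⟩
    simp only [LinearMap.sum_apply, LinearMap.comp_apply, hh]
    exact DirectSum.sum_univ_of (g x)
end

section
/- The class of Q-copure Baer injective modules is closed under extensions: if 0 → A → B → C → 0 is exact with A and C Q-copure Baer injective, then B is Q-copure Baer injective. -/
universe u

variable {R : Type u}

theorem copureBaerInjective_of_extension [Ring R] (Q : ModuleCat.{u} R → Prop)
    {A B C : Type u} [AddCommGroup A] [Module R A] [AddCommGroup B] [Module R B]
    [AddCommGroup C] [Module R C] (f : A →ₗ[R] B) (g : B →ₗ[R] C)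
    (hf : Function.Injective f) (hg : Function.Surjective g)
    (hexact : LinearMap.range f = LinearMap.ker g)
    (hA : CopureBaerInjective Q A) (hC : CopureBaerInjective Q C) :
    CopureBaerInjective Q B := by
  intro I hI φ
  -- Extend g ∘ φ : I → C to h : R → C
  obtain ⟨h, hh⟩ := hC I hI (g.comp φ)
  -- Lift h to k : R → B using surjectivity of g: k r = r • b with g b = h 1
  obtain ⟨b, hb⟩ := hg (h 1)
  let k : R →ₗ[R] B := LinearMap.toSpanSingleton R B b
  have hk : ∀ r : R, g (k r) = h r := by
    intro r
    have : g (r • b) = r • g b := map_smul g r b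
    simp only [k, LinearMap.toSpanSingleton_apply]
    rw [this, hb]
    calc r • h 1 = h (r • 1) := (map_smul h r 1).symm
    _ = h r := by rw [smul_eq_mul, mul_one]
  -- φ - k maps I into range f
  have hmem : ∀ x : I, φ x - k x ∈ LinearMap.range f := by
    intro x
    rw [hexact, LinearMap.mem_ker, map_sub, hk, hh, LinearMap.comp_apply, sub_self]
  let e : A ≃ₗ[R] LinearMap.range f := LinearEquiv.ofInjective f hf
  let d : I →ₗ[R] B := φ - k.comp (Submodule.subtype I)
  have hd : ∀ x : I, d x = φ x - k x := fun x => rfl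
  let θ : I →ₗ[R] A :=
    e.symm.toLinearMap.comp (d.codRestrict (LinearMap.range f)
      (fun x => by rw [hd]; exact hmem x))
  have hθ : ∀ x : I, f (θ x) = φ x - k x := by
    intro x
    have : (e (θ x) : B) = f (θ x) := rfl
    rw [← this]
    show ((e (e.symm _) : LinearMap.range f) : B) = _
    rw [e.apply_symm_apply]
    rfl
  obtain ⟨Θ, hΘ⟩ := hA I hI θ
  refine ⟨k + f.comp Θ, fun x => ?_⟩
  simp only [LinearMap.add_apply, LinearMap.comp_apply, hΘ, hθ]
  abel
end

section
/- If R is left Q-copure hereditary (every Q-copure left ideal of R is projective), then every homomorphic image of a Q-copure Baer injective module is Q-copure Baer injective. -/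
universe u

variable {R : Type u}

theorem quotient_copureBaerInjective_of_hereditary [Ring R] (Q : ModuleCat.{u} R → Prop)
    (hher : ∀ I : Ideal R, CopureIdeal Q I → Module.Projective R I)
    {M N : Type u} [AddCommGroup M] [Module R M] [AddCommGroup N] [Module R N]
    (g : M →ₗ[R] N) (hg : Function.Surjective g) (hM : CopureBaerInjective Q M) :
    CopureBaerInjective Q N := by
  intro I hI f
  haveI : Module.Projective R I := hher I hI
  obtain ⟨f', hf'⟩ := Module.projective_lifting_property g f hg
  obtain ⟨h, hh⟩ := hM I hI f'
  exact ⟨g.comp h, fun x => by simp [hh x, ← hf', LinearMap.comp_apply]⟩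
end

section
/- If every homomorphic image of every injective R-module is Q-copure Baer injective, then R is left Q-copure hereditary, i.e., every Q-copure left ideal of R is projective. -/
universe u

variable {R : Type u}

/-!
Write the ideal `I` as a quotient `π : F → I` of a free module and embed `F` into an injective
module `E` by `ι`. By hypothesis the induced map `I ≅ F ⧸ ker π → E ⧸ ι (ker π)` extends to `R`,
and since `R` is free the extension lifts to a map `R → E`. On `I` this lift takes values in
`ι F + ι (ker π) = ι F`, so pulling it back along `ι` gives a section of `π`: `I` is a direct
summand of a free module.
-/

open Function LinearMap Submodule

theorem Module.exists_embedding_into_injective [Ring R] (M : Type u) [AddCommGroup M]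
    [Module R M] :
    ∃ E : ModuleCat.{u} R, Module.Injective R E ∧ ∃ ι : M →ₗ[R] E, Function.Injective ι := by
  let E := CategoryTheory.Injective.under (ModuleCat.of R M)
  have : CategoryTheory.Injective (ModuleCat.of R E) := inferInstanceAs (CategoryTheory.Injective E)
  exact ⟨E, Module.injective_module_of_injective_object R E, _,
    (ModuleCat.mono_iff_injective (CategoryTheory.Injective.ι (ModuleCat.of R M))).mp inferInstance⟩

section
variable [Ring R] {F P E M : Type*} [AddCommGroup F] [Module R F] [AddCommGroup P] [Module R P]
  [AddCommGroup E] [Module R E] [AddCommGroup M] [Module R M]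

theorem LinearMap.exists_comp_eq_of_ker_le {π : F →ₗ[R] P} (hπ : Surjective π) (f : F →ₗ[R] M)
    (hf : ker π ≤ ker f) : ∃ g : P →ₗ[R] M, g ∘ₗ π = f :=
  ⟨(ker π).liftQ f hf ∘ₗ (π.quotKerEquivOfSurjective hπ).symm, by
    ext x
    simp⟩

theorem Module.Projective.of_lift_mod_map_ker [Module.Projective R F] {π : F →ₗ[R] P}
    (hπ : Surjective π) {ι : F →ₗ[R] E} (hι : Function.Injective ι) (τ : P →ₗ[R] E)
    (hτ : ∀ x, τ (π x) - ι x ∈ (ker π).map ι) : Module.Projective R P := by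
  have preimage : ∀ p, ∃ y, ι y = τ p ∧ π y = p := by
    intro p
    obtain ⟨x, rfl⟩ := hπ p
    obtain ⟨k, hk, hτk⟩ := hτ x
    refine ⟨x + k, ?_, ?_⟩
    · rw [map_add, hτk, add_sub_cancel]
    · rw [map_add, mem_ker.mp hk, add_zero]
  let e := LinearEquiv.ofInjective ι hι
  let s : P →ₗ[R] F :=
    e.symm ∘ₗ τ.codRestrict (range ι) fun p ↦ (preimage p).elim fun y hy ↦ ⟨y, hy.1⟩
  refine Module.Projective.of_split s π (LinearMap.ext fun p ↦ ?_)
  obtain ⟨y, hy, rfl⟩ := preimage p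
  have : s (π y) = y := e.symm_apply_eq.mpr (Subtype.ext hy.symm)
  simp [this]

end

theorem hereditary_of_images_of_injectives [Ring R] (Q : ModuleCat.{u} R → Prop)
    (h : ∀ (E N : Type u) [AddCommGroup E] [Module R E] [AddCommGroup N] [Module R N],
      Module.Injective R E → (∃ g : E →ₗ[R] N, Function.Surjective g) →
        CopureBaerInjective Q N) :
    ∀ I : Ideal R, CopureIdeal Q I → Module.Projective R I := by
  intro I hI
  let π := Finsupp.linearCombination R (id : I → I)
  have hπ : Surjective π := Finsupp.linearCombination_id_surjective R I
  obtain ⟨E, hE, ι, hι⟩ := Module.exists_embedding_into_injective (R := R) (I →₀ R)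
  let K := (ker π).map ι
  obtain ⟨g, hg⟩ := exists_comp_eq_of_ker_le hπ (K.mkQ ∘ₗ ι) fun x hx ↦
    (Quotient.mk_eq_zero K).mpr (mem_map_of_mem hx)
  obtain ⟨φ, hφ⟩ := h E (E ⧸ K) hE ⟨K.mkQ, K.mkQ_surjective⟩ I hI g
  obtain ⟨ψ, hψ⟩ := Module.projective_lifting_property K.mkQ φ K.mkQ_surjective
  refine Module.Projective.of_lift_mod_map_ker hπ hι (ψ ∘ₗ I.subtype) fun x ↦ ?_
  refine (Submodule.Quotient.eq K).mp ?_
  calc K.mkQ (ψ (π x)) = g (π x) := by rw [← hφ, ← hψ]; rfl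
    _ = K.mkQ (ι x) := LinearMap.congr_fun hg x
end

section
/- For a ring R and class Q of R-modules: every homomorphic image of an injective R-module is Q-copure Baer injective if and only if every finite sum of injective submodules of a module is Q-copure Baer injective. -/
/-!
A finite sum `⨆ i, N i` of submodules is a homomorphic image of the injective module
`Π i, N i`. Conversely, if `g : E → N` is onto, then `E × N` is the sum of the graph of `g` and
of `E × 0`, both isomorphic to `E`, and `N` is a retract of `E × N`; copure Baer injectivity
passes to retracts.
-/

universe u

variable {R : Type u}

universe v

theorem Module.Injective.of_linearEquiv {R : Type*} [Ring R] {A B : Type v} [AddCommGroup A]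
    [Module R A] [AddCommGroup B] [Module R B] (e : A ≃ₗ[R] B) [Module.Injective R A] :
    Module.Injective R B where
  out X Y _ _ _ _ f hf g := by
    obtain ⟨h, hh⟩ := Module.Injective.out f hf (e.symm.toLinearMap ∘ₗ g)
    exact ⟨e.toLinearMap ∘ₗ h, fun x => by simp [hh x]⟩

theorem Submodule.exists_surjective_pi_iSup {R M : Type*} [Ring R] [AddCommGroup M] [Module R M]
    {ι : Type*} [Fintype ι] (N : ι → Submodule R M) :
    ∃ g : (∀ i, N i) →ₗ[R] ↥(⨆ i, N i), Function.Surjective g := by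
  classical
  let e := DFinsupp.linearEquivFunOnFintype (R := R) (M := fun i => N i)
  let σ := DFinsupp.lsum ℕ (fun i => (N i).subtype)
  have hσ : ∀ v, σ (e.symm v) ∈ ⨆ i, N i := fun v => by
    rw [Submodule.iSup_eq_range_dfinsupp_lsum]
    exact LinearMap.mem_range_self σ _
  refine ⟨(σ ∘ₗ e.symm.toLinearMap).codRestrict _ hσ, ?_⟩
  rintro ⟨y, hy⟩
  obtain ⟨v, rfl⟩ := (Submodule.mem_iSup_iff_exists_dfinsupp N y).mp hy
  exact ⟨e v, Subtype.ext <| by simp [σ]⟩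

theorem LinearMap.range_prod_id_sup_range_inl {R E N : Type*} [Ring R] [AddCommGroup E]
    [Module R E] [AddCommGroup N] [Module R N] {g : E →ₗ[R] N} (hg : Function.Surjective g) :
    range (LinearMap.id.prod g) ⊔ range (inl R E N) = ⊤ := by
  refine eq_top_iff.mpr fun ⟨e, n⟩ _ => ?_
  obtain ⟨x, rfl⟩ := hg n
  have h := Submodule.add_mem_sup (mem_range_self (LinearMap.id.prod g) x)
    (mem_range_self (inl R E N) (e - x))
  simpa using h

theorem CopureBaerInjective.of_leftInverse {R : Type u} [Ring R] {Q : ModuleCat.{u} R → Prop}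
    {A B : Type*} [AddCommGroup A] [Module R A] [AddCommGroup B] [Module R B]
    (p : A →ₗ[R] B) (s : B →ₗ[R] A) (hps : Function.LeftInverse p s)
    (hA : CopureBaerInjective Q A) : CopureBaerInjective Q B := by
  intro I hI g
  obtain ⟨f, hf⟩ := hA I hI (s ∘ₗ g)
  exact ⟨p ∘ₗ f, fun x => by simp [hf x, hps (g x)]⟩

theorem images_of_injectives_iff_finite_sums [Ring R] (Q : ModuleCat.{u} R → Prop) :
    (∀ (E N : Type u) [AddCommGroup E] [Module R E] [AddCommGroup N] [Module R N],
      Module.Injective R E → (∃ g : E →ₗ[R] N, Function.Surjective g) →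
        CopureBaerInjective Q N) ↔
    (∀ (M : Type u) [AddCommGroup M] [Module R M] (ι : Type) [Fintype ι]
      (N : ι → Submodule R M), (∀ i, Module.Injective R (N i)) →
        CopureBaerInjective Q (↥(⨆ i, N i))) := by
  constructor
  · intro himage M _ _ ι _ N hN
    exact himage _ _ inferInstance (Submodule.exists_surjective_pi_iSup N)
  · rintro hsum E N _ _ _ _ hE ⟨g, hg⟩
    let S : Bool → Submodule R (E × N) := fun b =>
      cond b (LinearMap.range (LinearMap.id.prod g)) (LinearMap.range (LinearMap.inl R E N))
    have hS : ∀ b, Module.Injective R (S b) := by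
      rintro (_ | _)
      · exact .of_linearEquiv (LinearEquiv.ofInjective _ LinearMap.inl_injective)
      · exact .of_linearEquiv (LinearEquiv.ofInjective _ fun x y hxy => congrArg Prod.fst hxy)
    have hS_sup : ⨆ b, S b = ⊤ := by
      rw [iSup_bool_eq]
      exact LinearMap.range_prod_id_sup_range_inl hg
    have hprod : CopureBaerInjective Q (E × N) := by
      have h := hsum (E × N) Bool S hS
      rw [hS_sup] at h
      exact h.of_leftInverse Submodule.topEquiv.toLinearMap Submodule.topEquiv.symm.toLinearMap
        Submodule.topEquiv.apply_symm_apply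
    exact hprod.of_leftInverse (LinearMap.snd R E N) (LinearMap.inr R E N) fun _ => rfl
end

section
/- Every left R-module can be embedded as a Q-copure submodule of a Q-copure Baer injective module. -/
universe u

variable {R : Type u}

/-!
Build `B` from a free module: besides a generator for each `a : A`, adjoin at once a generator
`node I w c` for every left ideal `I` and every choice of representatives
`x ↦ ∑ i, single (w x i) (c x i)` of a would-be map `I → B`. The relation
`x • node = ∑ i, single (w x i) (c x i)` is imposed when `I` is `Q`-copure and the
representatives are linear modulo the relations themselves; since all generators exist from the
start, the relation module is just the least fixed point of a monotone operator. Any map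
`I → B` from a `Q`-copure ideal then extends by `r ↦ r • node`. Conversely, a map `A → M` into a
`Q`-copure Baer injective module (every module of `Q`, every injective module) extends to `B` by
sending each node to some `m` with `ℓ x = x • m`, where `ℓ : I → M` is the induced linear map;
testing against an injective module containing `A` shows that `A → B` is injective.
-/
open Finsupp Submodule

section Ring

variable [Ring R] {Q : ModuleCat.{u} R → Prop}

theorem CopureBaerInjective.of_mem {M : ModuleCat.{u} R} (hM : Q M) : CopureBaerInjective Q M :=
  fun _ hI g => hI M hM g

theorem CopureBaerInjective.of_baer {N : Type*} [AddCommGroup N] [Module R N]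
    (hN : Module.Baer R N) : CopureBaerInjective Q N := fun I _ g => by
  obtain ⟨h, hh⟩ := hN I g
  exact ⟨h, fun x => hh x x.2⟩

theorem CopureBaerInjective.exists_smul_eq {N : Type*} [AddCommGroup N] [Module R N]
    (hN : CopureBaerInjective Q N) {I : Ideal R} (hI : CopureIdeal Q I) (ℓ : I →ₗ[R] N) :
    ∃ m : N, ∀ x : I, ℓ x = (x : R) • m := by
  obtain ⟨h, hh⟩ := hN I hI ℓ
  refine ⟨h 1, fun x => ?_⟩
  rw [← hh x, ← map_smul, smul_eq_mul, mul_one]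

variable (R) in
theorem exists_injective_linearMap_to_injective (A : Type u) [AddCommGroup A] [Module R A] :
    ∃ (J : ModuleCat.{u} R) (e : A →ₗ[R] J), Function.Injective e ∧ Module.Injective R J := by
  let J := CategoryTheory.Injective.under (ModuleCat.of R A)
  let e : ModuleCat.of R A ⟶ J := CategoryTheory.Injective.ι _
  have : CategoryTheory.Injective (ModuleCat.of R J) :=
    inferInstanceAs (CategoryTheory.Injective J)
  exact ⟨J, e.hom, (ModuleCat.mono_iff_injective _).1 inferInstance,
    Module.injective_module_of_injective_object R J⟩

end Ring

theorem Finsupp.exists_eq_sum_fin_single {α M : Type*} [AddCommMonoid M] (v : α →₀ M) :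
    ∃ (n : ℕ) (w : Fin n → α) (c : Fin n → M), v = ∑ i, single (w i) (c i) := by
  induction v using Finsupp.induction with
  | zero => exact ⟨0, Fin.elim0, Fin.elim0, by simp⟩
  | single_add a b f _ _ ih =>
    obtain ⟨n, w, c, rfl⟩ := ih
    exact ⟨n + 1, Fin.cons a w, Fin.cons b c, by simp [Fin.sum_univ_succ]⟩

namespace CopureBaerHull

variable (R) in
inductive Gen (A : Type u) [Ring R] : Type u
  | base : A → Gen A
  | node (I : Ideal R) {n : I → ℕ} (w : ∀ x, Fin (n x) → Gen A) (c : ∀ x, Fin (n x) → R) : Gen A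

variable [Ring R] (Q : ModuleCat.{u} R → Prop) {A : Type u}

noncomputable def rep {I : Ideal R} {n : I → ℕ} (w : ∀ x, Fin (n x) → Gen R A)
    (c : ∀ x, Fin (n x) → R) (x : I) : Gen R A →₀ R :=
  ∑ i, single (w x i) (c x i)

def nodeRelations (S : Submodule R (Gen R A →₀ R)) : Set (Gen R A →₀ R) :=
  {z | ∃ (I : Ideal R) (n : I → ℕ) (w : ∀ x, Fin (n x) → Gen R A) (c : ∀ x, Fin (n x) → R),
    CopureIdeal Q I ∧ (∃ ℓ : I →ₗ[R] (Gen R A →₀ R) ⧸ S, ∀ x, ℓ x = S.mkQ (rep w c x)) ∧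
    ∃ x : I, z = single (.node I w c) (x : R) - rep w c x}

theorem nodeRelations_mono : Monotone (nodeRelations (A := A) Q) := by
  rintro S S' hS z ⟨I, n, w, c, hI, ⟨ℓ, hℓ⟩, hz⟩
  exact ⟨I, n, w, c, hI, ⟨factor hS ∘ₗ ℓ, fun x => by simp [hℓ]⟩, hz⟩

section GenLift

variable {M : Type*} [AddCommGroup M] [Module R M]

noncomputable def genLift (g : A → M) : Gen R A → M
  | .base a => g a
  | .node I w c => Classical.epsilon fun m : M =>
      ∀ x : I, ∑ i, c x i • genLift g (w x i) = (x : R) • m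

theorem genLift_node (g : A → M) {I : Ideal R} {n : I → ℕ} (w : ∀ x, Fin (n x) → Gen R A)
    (c : ∀ x, Fin (n x) → R) (h : ∃ m : M, ∀ x : I, ∑ i, c x i • genLift g (w x i) = (x : R) • m)
    (x : I) : ∑ i, c x i • genLift g (w x i) = (x : R) • genLift g (.node I w c) := by
  rw [genLift]
  exact Classical.epsilon_spec h x

theorem linearCombination_genLift_rep (g : A → M) {I : Ideal R} {n : I → ℕ}
    (w : ∀ x, Fin (n x) → Gen R A) (c : ∀ x, Fin (n x) → R) (x : I) :
    linearCombination R (genLift g) (rep w c x) = ∑ i, c x i • genLift g (w x i) := by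
  simp [rep]

end GenLift

variable [AddCommGroup A] [Module R A]

variable (R A) in
def baseRelations : Set (Gen R A →₀ R) :=
  Set.range (fun p : A × A => single (.base (p.1 + p.2)) 1 - single (.base p.1) 1 -
      single (.base p.2) 1) ∪
    Set.range (fun p : R × A => single (.base (p.1 • p.2)) 1 - p.1 • single (.base p.2) 1)

variable (A) in
noncomputable def step : Submodule R (Gen R A →₀ R) →o Submodule R (Gen R A →₀ R) where
  toFun S := span R (baseRelations R A ∪ nodeRelations Q S)
  monotone' _ _ hS := span_mono (Set.union_subset_union_right _ (nodeRelations_mono Q hS))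

variable (A) in
noncomputable def relations : Submodule R (Gen R A →₀ R) := (step Q A).lfp

theorem baseRelations_subset_relations : baseRelations R A ⊆ relations Q A := fun _ hz => by
  rw [relations, ← OrderHom.map_lfp]
  exact subset_span (Or.inl hz)

theorem nodeRelations_subset_relations : nodeRelations Q (relations Q A) ⊆ relations Q A :=
  fun _ hz => by
  rw [relations, ← OrderHom.map_lfp]
  exact subset_span (Or.inr hz)

theorem relations_le {S : Submodule R (Gen R A →₀ R)} (hbase : baseRelations R A ⊆ S)
    (hnode : nodeRelations Q S ⊆ S) : relations Q A ≤ S :=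
  OrderHom.lfp_le _ (span_le.2 (Set.union_subset hbase hnode))

variable (A) in
abbrev Hull : Type u := (Gen R A →₀ R) ⧸ relations Q A

variable (A) in
noncomputable def ι : A →ₗ[R] Hull Q A where
  toFun a := mkQ _ (single (.base a) 1)
  map_add' a b := by
    rw [← sub_eq_zero, ← map_add, ← map_sub, mkQ_apply, Quotient.mk_eq_zero, ← sub_sub]
    exact baseRelations_subset_relations Q (Or.inl ⟨(a, b), rfl⟩)
  map_smul' r a := by
    rw [RingHom.id_apply, ← sub_eq_zero, ← map_smul, ← map_sub, mkQ_apply, Quotient.mk_eq_zero]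
    exact baseRelations_subset_relations Q (Or.inr ⟨(r, a), rfl⟩)

section Lift

variable {M : Type*} [AddCommGroup M] [Module R M]

theorem relations_le_ker {g : A →ₗ[R] M} (hM : CopureBaerInjective Q M) :
    relations Q A ≤ LinearMap.ker (linearCombination R (genLift g)) := by
  set Φ := linearCombination R (genLift (R := R) g)
  refine relations_le Q ?_ ?_
  · rintro z (⟨⟨a, b⟩, rfl⟩ | ⟨⟨r, a⟩, rfl⟩) <;> simp [Φ, genLift]
  · rintro z ⟨I, n, w, c, hI, ⟨ℓ, hℓ⟩, x, rfl⟩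
    obtain ⟨m, hm⟩ := hM.exists_smul_eq hI ((LinearMap.ker Φ).liftQ Φ le_rfl ∘ₗ ℓ)
    have hsolution : ∀ y : I, ∑ i, c y i • genLift g (w y i) = (y : R) • m := fun y => by
      rw [← hm y, LinearMap.comp_apply, hℓ, mkQ_apply, liftQ_apply, linearCombination_genLift_rep]
    have hnode := genLift_node g w c ⟨m, hsolution⟩ x
    rw [SetLike.mem_coe, LinearMap.mem_ker, map_sub, linearCombination_genLift_rep, hnode]
    simp [Φ]

theorem exists_extend_ι (hM : CopureBaerInjective Q M) (g : A →ₗ[R] M) :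
    ∃ h : Hull Q A →ₗ[R] M, ∀ a, h (ι Q A a) = g a :=
  ⟨(relations Q A).liftQ (linearCombination R (genLift g)) (relations_le_ker Q hM),
    fun a => by simp [ι, genLift]⟩

end Lift

theorem injective_ι : Function.Injective (ι Q A) := by
  obtain ⟨J, e, he, hJ⟩ := exists_injective_linearMap_to_injective R A
  have hJ' : CopureBaerInjective Q J := .of_baer (Module.Baer.of_injective hJ)
  obtain ⟨h, hh⟩ := exists_extend_ι Q hJ' e
  exact Function.Injective.of_comp (f := h) ((funext hh : h ∘ ι Q A = e) ▸ he)

theorem isCopure_ι : IsCopure Q (ι Q A) := fun _ hM g =>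
  exists_extend_ι Q (CopureBaerInjective.of_mem hM) g

theorem copureBaerInjective_hull : CopureBaerInjective Q (Hull Q A) := by
  intro I hI g
  have hrep : ∀ x : I, ∃ (n : ℕ) (w : Fin n → Gen R A) (c : Fin n → R),
      mkQ _ (∑ i, single (w i) (c i)) = g x := fun x => by
    obtain ⟨v, hv⟩ := mkQ_surjective _ (g x)
    obtain ⟨n, w, c, rfl⟩ := exists_eq_sum_fin_single v
    exact ⟨n, w, c, hv⟩
  choose n w c hrep using hrep
  refine ⟨LinearMap.toSpanSingleton R _ (mkQ _ (single (.node I w c) 1)), fun x => ?_⟩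
  have hrel := nodeRelations_subset_relations Q
    ⟨I, n, w, c, hI, ⟨g, fun x => (hrep x).symm⟩, x, rfl⟩
  rw [SetLike.mem_coe, ← Quotient.mk_eq_zero, Quotient.mk_sub, sub_eq_zero] at hrel
  rw [LinearMap.toSpanSingleton_apply, ← map_smul, smul_single_one, mkQ_apply, hrel, ← hrep]
  rfl

end CopureBaerHull

theorem embed_copure_in_copureBaerInjective [Ring R] (Q : ModuleCat.{u} R → Prop)
    (A : Type u) [AddCommGroup A] [Module R A] :
    ∃ (B : ModuleCat.{u} R) (f : A →ₗ[R] B), Function.Injective f ∧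
      IsCopure Q f ∧ CopureBaerInjective Q B :=
  ⟨.of R (CopureBaerHull.Hull Q A), CopureBaerHull.ι Q A, CopureBaerHull.injective_ι Q,
    CopureBaerHull.isCopure_ι Q, CopureBaerHull.copureBaerInjective_hull Q⟩
end

section
/- If A₀ ⊆ A₁ ⊆ A₂ ⊆ ⋯ is an ascending chain of R-modules such that each Aᵢ is a Q-copure submodule of A_{i+1}, then A₀ is a Q-copure submodule of the union ⋃ᵢ Aᵢ. -/
universe u

variable {R : Type u}

theorem copure_of_chain [Ring R] (Q : ModuleCat.{u} R → Prop)
    {B : Type u} [AddCommGroup B] [Module R B] (A : ℕ → Submodule R B)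
    (hmono : ∀ i, A i ≤ A (i + 1))
    (hcopure : ∀ i, IsCopure Q (Submodule.inclusion (hmono i))) :
    IsCopure Q (Submodule.inclusion (le_iSup A 0)) := by
  intro M hQ g
  classical
  have hA : Monotone A := monotone_nat_of_le_succ hmono
  -- build compatible extensions
  let gs : ∀ i, ↥(A i) →ₗ[R] ↥M := fun i => Nat.rec g (fun n gn => (hcopure n M hQ gn).choose) i
  have hstep : ∀ n (a : A n), gs (n + 1) (Submodule.inclusion (hmono n) a) = gs n a :=
    fun n a => (hcopure n M hQ (gs n)).choose_spec a
  have hcomp : ∀ i j (hij : i ≤ j) (x : B) (hx : x ∈ A i),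
      gs j ⟨x, hA hij hx⟩ = gs i ⟨x, hx⟩ := by
    intro i j hij
    induction j, hij using Nat.le_induction with
    | base => intro x hx; rfl
    | succ j hij ih =>
      intro x hx
      have h1 : gs (j + 1) ⟨x, hA (Nat.le_succ_of_le hij) hx⟩ = gs j ⟨x, hA hij hx⟩ :=
        hstep j ⟨x, hA hij hx⟩
      rw [h1, ih]
  have key : ∀ x : ↥(⨆ i, A i), ∃ i, (x : B) ∈ A i := by
    intro x
    exact (Submodule.mem_iSup_of_directed A (hA.directed_le)).1 x.2
  let idx : ↥(⨆ i, A i) → ℕ := fun x => (key x).choose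
  have hidx : ∀ x, (x : B) ∈ A (idx x) := fun x => (key x).choose_spec
  let H : ↥(⨆ i, A i) → ↥M := fun x => gs (idx x) ⟨x, hidx x⟩
  have heval : ∀ (x : ↥(⨆ i, A i)) (i : ℕ) (hx : (x : B) ∈ A i), H x = gs i ⟨x, hx⟩ := by
    intro x i hx
    have h1 : gs (max (idx x) i) ⟨x, hA (le_max_left _ _) (hidx x)⟩ = gs (idx x) ⟨x, hidx x⟩ :=
      hcomp _ _ (le_max_left _ _) x (hidx x)
    have h2 : gs (max (idx x) i) ⟨x, hA (le_max_right _ _) hx⟩ = gs i ⟨x, hx⟩ :=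
      hcomp _ _ (le_max_right _ _) x hx
    show gs (idx x) ⟨x, hidx x⟩ = gs i ⟨x, hx⟩
    rw [← h1, ← h2]
  refine ⟨{ toFun := H, map_add' := ?_, map_smul' := ?_ }, ?_⟩
  · intro x y
    obtain ⟨i, hi⟩ := key x
    obtain ⟨j, hj⟩ := key y
    have hx : (x : B) ∈ A (max i j) := hA (le_max_left _ _) hi
    have hy : (y : B) ∈ A (max i j) := hA (le_max_right _ _) hj
    have hxy : ((x + y : ↥(⨆ i, A i)) : B) ∈ A (max i j) := by
      simpa using add_mem hx hy
    rw [heval (x + y) _ hxy, heval x _ hx, heval y _ hy, ← map_add]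
    congr 1
  · intro r x
    obtain ⟨i, hi⟩ := key x
    have hx : (x : B) ∈ A i := hi
    have hrx : ((r • x : ↥(⨆ i, A i)) : B) ∈ A i := by simpa using Submodule.smul_mem _ r hx
    show H (r • x) = (RingHom.id R) r • H x
    rw [heval (r • x) _ hrx, heval x _ hx]
    simp only [RingHom.id_apply]
    rw [← map_smul]
    congr 1
  · intro a
    have ha : ((Submodule.inclusion (le_iSup A 0) a : ↥(⨆ i, A i)) : B) ∈ A 0 := a.2
    show H _ = g a
    rw [heval _ 0 ha]
    rfl
end

section
/- Every R-module embeds into a Q-copure Baer injective R-module. -/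
universe u

variable {R : Type u}

/-! Injective modules satisfy Baer's criterion, so they extend maps from every left ideal,
not only from the `Q`-copure ones; and module categories have enough injectives. -/

theorem Module.Baer.copureBaerInjective [Ring R] (Q : ModuleCat.{u} R → Prop) {N : Type*}
    [AddCommGroup N] [Module R N] (hN : Module.Baer R N) : CopureBaerInjective Q N :=
  fun I _ g ↦
    let ⟨h, hh⟩ := hN I g
    ⟨h, fun x ↦ hh x x.2⟩

open CategoryTheory in
theorem ModuleCat.exists_injective_embedding {R : Type*} [Ring R] [Small.{u} R]
    (A : Type u) [AddCommGroup A] [Module R A] :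
    ∃ (B : ModuleCat.{u} R) (f : A →ₗ[R] B), Function.Injective f ∧ Module.Injective R B :=
  let A' := ModuleCat.of R A
  ⟨Injective.under A', (Injective.ι A').hom,
    (ModuleCat.mono_iff_injective _).mp inferInstance,
    (Module.injective_iff_injective_object R _).mpr (Injective.injective_under A')⟩

theorem embed_in_copureBaerInjective [Ring R] (Q : ModuleCat.{u} R → Prop)
    (A : Type u) [AddCommGroup A] [Module R A] :
    ∃ (B : ModuleCat.{u} R) (f : A →ₗ[R] B), Function.Injective f ∧
      CopureBaerInjective Q B := by
  obtain ⟨B, f, hf, hB⟩ := ModuleCat.exists_injective_embedding (R := R) A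
  exact ⟨B, f, hf, (Module.Baer.of_injective hB).copureBaerInjective Q⟩
end

section
/- For a left ideal I of R, the inclusion I → R is Q-copure (i.e., every module in Q is injective with respect to it) if and only if every Q-copure Baer injective R-module is injective with respect to the inclusion I → R. -/
universe u

variable {R : Type u}

theorem copureIdeal_iff_all_copureBaerInjective_injective_rel [Ring R]
    (Q : ModuleCat.{u} R → Prop) (I : Ideal R) :
    CopureIdeal Q I ↔
      ∀ (M : Type u) [AddCommGroup M] [Module R M], CopureBaerInjective Q M →
        ∀ g : I →ₗ[R] M, ∃ h : R →ₗ[R] M, ∀ x : I, h x = g x := by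
  constructor
  · intro hI M _ _ hM g
    exact hM I hI g
  · intro h M hQ g
    exact h M (fun J hJ g' => hJ M hQ g') g
end

section
/- Let R be a left self-injective ring. If R/J is Q-copure Baer injective for every essential left ideal J of R, then R/I is Q-copure Baer injective for every left ideal I of R. -/
universe u

variable {R : Type u}

theorem quotients_copureBaerInjective_of_essential [Ring R] (Q : ModuleCat.{u} R → Prop)
    (hself : Module.Injective R R)
    (hess : ∀ J : Ideal R, (∀ K : Ideal R, K ≠ ⊥ → J ⊓ K ≠ ⊥) →
      CopureBaerInjective Q (R ⧸ J)) :
    ∀ I : Ideal R, CopureBaerInjective Q (R ⧸ I) := by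
  intro I P hP g
  classical
  -- Zorn: a maximal `K` with `I ⊓ K = ⊥`
  obtain ⟨K, hmax⟩ := zorn_le₀ {K : Ideal R | I ⊓ K = ⊥} (by
    intro c hc hchain
    rcases c.eq_empty_or_nonempty with rfl | hne
    · exact ⟨⊥, by simp, by simp⟩
    · refine ⟨sSup c, ?_, fun z hz => le_sSup hz⟩
      rw [Set.mem_setOf_eq, eq_bot_iff]
      intro x hx
      obtain ⟨y, hy, hxy⟩ := (Submodule.mem_sSup_of_directed hne hchain.directedOn).1 hx.2
      have : x ∈ I ⊓ y := ⟨hx.1, hxy⟩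
      rw [hc hy] at this
      exact this)
  have hIK : I ⊓ K = ⊥ := hmax.prop
  set J : Ideal R := I ⊔ K with hJ
  -- J is essential
  have hJess : ∀ L : Ideal R, L ≠ ⊥ → J ⊓ L ≠ ⊥ := by
    intro L hL hJL
    apply hL
    have hKL : I ⊓ (K ⊔ L) = ⊥ := by
      rw [eq_bot_iff]
      rintro x ⟨hxI, hxKL⟩
      obtain ⟨k, hk, l, hl, rfl⟩ := Submodule.mem_sup.1 hxKL
      have hlJ : l ∈ J ⊓ L := by
        refine ⟨?_, hl⟩
        have : (k + l) - k ∈ J := sub_mem (Submodule.mem_sup_left hxI)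
          (Submodule.mem_sup_right hk)
        simpa using this
      rw [hJL] at hlJ
      have hk0 : k + l ∈ I ⊓ K := by
        simp only [Submodule.mem_bot] at hlJ
        exact ⟨hxI, by simpa [hlJ] using hk⟩
      rw [hIK] at hk0
      simpa using hk0
    have hle : K ⊔ L ≤ K := hmax.2 hKL le_sup_left
    have hLK : L ≤ K := le_trans le_sup_right hle
    rw [eq_bot_iff]
    intro x hx
    have : x ∈ J ⊓ L := ⟨Submodule.mem_sup_right (hLK hx), hx⟩
    rw [hJL] at this
    exact this
  -- the projection `R⧸I → R⧸J`
  have hIJ : I ≤ J := le_sup_left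
  let q : (R ⧸ I) →ₗ[R] (R ⧸ J) := Submodule.mapQ I J LinearMap.id hIJ
  have hq : ∀ x : R, q (Submodule.Quotient.mk x) = Submodule.Quotient.mk x := fun x => by
    simp [q, Submodule.mapQ_apply]
  -- extend `q ∘ g` using the hypothesis on essential ideals
  obtain ⟨hh, hhh⟩ := hess J hJess P hP (q.comp g)
  -- lift `hh` along `q` using freeness of `R`
  obtain ⟨r₀, hr₀⟩ := Submodule.Quotient.mk_surjective J (hh 1)
  let ℓ : R →ₗ[R] R ⧸ I := LinearMap.toSpanSingleton R _ (Submodule.Quotient.mk r₀)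
  have hqℓ : ∀ x : R, q (ℓ x) = hh x := by
    intro x
    have : ℓ x = x • (Submodule.Quotient.mk r₀ : R ⧸ I) := rfl
    rw [this, map_smul, hq, hr₀, ← map_smul, smul_eq_mul, mul_one]
  -- the defect `g - ℓ` on `P` lands in `J/I`, hence lifts to `K ⊆ R`
  have huniq : ∀ k k' : R, k ∈ K → k' ∈ K →
      (Submodule.Quotient.mk k : R ⧸ I) = Submodule.Quotient.mk k' → k = k' := by
    intro k k' hk hk' hkk
    have h1 : k - k' ∈ I := (Submodule.Quotient.eq I).1 hkk
    have : k - k' ∈ I ⊓ K := ⟨h1, sub_mem hk hk'⟩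
    rw [hIK] at this
    simpa [sub_eq_zero] using this
  have hex : ∀ p : P, ∃ k : R, k ∈ K ∧
      (Submodule.Quotient.mk k : R ⧸ I) = g p - ℓ (p : R) := by
    intro p
    obtain ⟨x, hx⟩ := Submodule.Quotient.mk_surjective I (g p - ℓ (p : R))
    have hx0 : q (Submodule.Quotient.mk x) = 0 := by
      rw [hx, map_sub, hqℓ]
      have := hhh p
      simp only [LinearMap.comp_apply] at this
      rw [this, sub_self]
    rw [hq] at hx0
    have hxJ : x ∈ J := (Submodule.Quotient.mk_eq_zero J).1 hx0
    obtain ⟨i, hi, k, hk, rfl⟩ := Submodule.mem_sup.1 hxJ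
    refine ⟨k, hk, ?_⟩
    rw [← hx]
    exact (Submodule.Quotient.eq I).2 (by simpa using hi)
  choose t ht1 ht2 using hex
  -- `t` is linear
  let τ : P →ₗ[R] R :=
    { toFun := t
      map_add' := by
        intro p p'
        refine huniq _ _ (ht1 _) (add_mem (ht1 p) (ht1 p')) ?_
        rw [ht2 (p + p')]
        have : (Submodule.Quotient.mk (t p + t p') : R ⧸ I)
            = Submodule.Quotient.mk (t p) + Submodule.Quotient.mk (t p') :=
          Submodule.Quotient.mk_add I
        rw [this, ht2 p, ht2 p']
        push_cast
        rw [map_add, map_add]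
        abel
      map_smul' := by
        intro r p
        refine huniq _ _ (ht1 _) (Submodule.smul_mem K r (ht1 p)) ?_
        rw [ht2 (r • p)]
        show g (r • p) - ℓ ↑(r • p) = Submodule.Quotient.mk (r • t p)
        rw [Submodule.Quotient.mk_smul I r (t p), ht2 p]
        have hc : ((r • p : P) : R) = r • (p : R) := rfl
        rw [hc, smul_sub, map_smul, map_smul] }
  -- extend `τ` to `R` by self-injectivity
  obtain ⟨T, hT⟩ := hself.out P.subtype Subtype.val_injective τ
  refine ⟨ℓ + I.mkQ.comp T, ?_⟩
  intro p
  have hTp : T (p : R) = t p := hT p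
  simp only [LinearMap.add_apply, LinearMap.comp_apply, hTp, Submodule.mkQ_apply]
  rw [ht2 p]
  abel
end

section
/- A ring R is left Q-copure split (every Q-copure left ideal is a direct summand of R) if and only if every left R-module is Q-copure Baer injective. -/
universe u

variable {R : Type u}

/- The Baer-type condition for a single ideal `I`, quantified over all modules, is equivalent to
`I` being a direct summand: a complement yields a projection onto `I` through which every map
extends, and conversely an extension of `id : I → I` is a projection onto `I` whose kernel is a
complement. -/

universe v

theorem Submodule.exists_isCompl_iff_forall_exists_extend {S : Type*} {M : Type v} [Ring S]
    [AddCommGroup M] [Module S M] (p : Submodule S M) :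
    (∃ q : Submodule S M, IsCompl p q) ↔
      ∀ (N : Type v) [AddCommGroup N] [Module S N] (g : p →ₗ[S] N),
        ∃ h : M →ₗ[S] N, ∀ x : p, h x = g x := by
  constructor
  · rintro ⟨q, hpq⟩ N _ _ g
    exact ⟨g ∘ₗ p.projectionOnto q hpq, fun x => by
      rw [LinearMap.comp_apply, projectionOnto_apply_left]⟩
  · intro hextend
    obtain ⟨proj, hproj⟩ := hextend p LinearMap.id
    exact ⟨LinearMap.ker proj, LinearMap.isCompl_of_proj hproj⟩

theorem copureSplit_iff_all_copureBaerInjective [Ring R] (Q : ModuleCat.{u} R → Prop) :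
    (∀ I : Ideal R, CopureIdeal Q I → ∃ J : Ideal R, IsCompl I J) ↔
      ∀ (M : Type u) [AddCommGroup M] [Module R M], CopureBaerInjective Q M := by
  simp only [Submodule.exists_isCompl_iff_forall_exists_extend, CopureBaerInjective]
  exact ⟨fun hsplit M _ _ I hI g => hsplit I hI M g, fun hbaer I hI M _ _ g => hbaer M I hI g⟩
end

section
/- A ring R is left Q-copure split if and only if every Q-copure left ideal of R is Q-copure Baer injective (as an R-module). -/
universe u

variable {R : Type u}

theorem Submodule.exists_extend_of_isCompl {S M N : Type*} [Ring S] [AddCommGroup M] [Module S M]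
    [AddCommGroup N] [Module S N] {p q : Submodule S M} (hpq : IsCompl p q) (g : p →ₗ[S] N) :
    ∃ f : M →ₗ[S] N, ∀ x : p, f x = g x :=
  ⟨g ∘ₗ p.projectionOnto q hpq, fun x => congrArg g (p.projectionOnto_apply_left hpq x)⟩

theorem copureBaerInjective_of_forall_isCompl [Ring R] {Q : ModuleCat.{u} R → Prop}
    (hsplit : ∀ I : Ideal R, CopureIdeal Q I → ∃ J : Ideal R, IsCompl I J)
    (N : Type*) [AddCommGroup N] [Module R N] : CopureBaerInjective Q N := fun I hI g =>
  let ⟨_, hIJ⟩ := hsplit I hI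
  Submodule.exists_extend_of_isCompl hIJ g

theorem CopureBaerInjective.exists_isCompl [Ring R] {Q : ModuleCat.{u} R → Prop} {I : Ideal R}
    (hI : CopureIdeal Q I) (hinj : CopureBaerInjective Q I) : ∃ J : Ideal R, IsCompl I J :=
  let ⟨r, hr⟩ := hinj I hI LinearMap.id
  ⟨LinearMap.ker r, LinearMap.isCompl_of_proj hr⟩

theorem copureSplit_iff_copureIdeals_copureBaerInjective [Ring R]
    (Q : ModuleCat.{u} R → Prop) :
    (∀ I : Ideal R, CopureIdeal Q I → ∃ J : Ideal R, IsCompl I J) ↔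
      ∀ I : Ideal R, CopureIdeal Q I → CopureBaerInjective Q I :=
  ⟨fun hsplit I _ => copureBaerInjective_of_forall_isCompl hsplit I,
    fun hinj I hI => (hinj I hI).exists_isCompl hI⟩
end

section
/- A ring R is left Q-copure split if and only if (a) every Q-copure left ideal of R is projective and (b) every free left R-module is Q-copure Baer injective. -/
universe u

variable {R : Type u}

/-!
A direct summand `I` of `R` is projective, and every map out of it extends along the projection
`R → I`. Conversely, a projective `I` is a retract of the free module `I →₀ R`; extending the section
`I → (I →₀ R)` to `R` and composing with the retraction gives a projection `R → I`, whose kernel is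
a complement of `I`.
-/

namespace Submodule

variable [Ring R] {M N : Type*} [AddCommGroup M] [Module R M] [AddCommGroup N] [Module R N]
  {p q : Submodule R M}

theorem exists_extend_of_isCompl_s16 (h : IsCompl p q) (g : p →ₗ[R] N) :
    ∃ f : M →ₗ[R] N, ∀ x : p, f x = g x :=
  ⟨g ∘ₗ p.projectionOnto q h, fun x => by simp⟩

theorem projective_of_isCompl [Module.Projective R M] (h : IsCompl p q) :
    Module.Projective R p :=
  Module.Projective.of_split p.subtype (p.projectionOnto q h) (by ext x; simp)

theorem exists_isCompl_of_projective [Module.Projective R p]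
    (hext : ∀ g : p →ₗ[R] (p →₀ R), ∃ f : M →ₗ[R] (p →₀ R), ∀ x : p, f x = g x) :
    ∃ q : Submodule R M, IsCompl p q := by
  obtain ⟨s, hs⟩ := Module.projective_def.mp ‹Module.Projective R p›
  obtain ⟨f, hf⟩ := hext s
  let π : M →ₗ[R] p := Finsupp.linearCombination R id ∘ₗ f
  have hπ : ∀ x : p, π x = x := fun x => by simp [π, hf x, hs x]
  exact ⟨LinearMap.ker π, LinearMap.isCompl_of_proj hπ⟩

end Submodule

theorem copureSplit_iff_hereditary_and_free [Ring R] (Q : ModuleCat.{u} R → Prop) :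
    (∀ I : Ideal R, CopureIdeal Q I → ∃ J : Ideal R, IsCompl I J) ↔
      ((∀ I : Ideal R, CopureIdeal Q I → Module.Projective R I) ∧
        ∀ (F : Type u) [AddCommGroup F] [Module R F], Module.Free R F →
          CopureBaerInjective Q F) := by
  constructor
  · intro hsplit
    refine ⟨fun I hI => ?_, fun F _ _ _ I hI g => ?_⟩
    · obtain ⟨J, hJ⟩ := hsplit I hI
      exact Submodule.projective_of_isCompl hJ
    · obtain ⟨J, hJ⟩ := hsplit I hI
      exact Submodule.exists_extend_of_isCompl_s16 hJ g
  · rintro ⟨hproj, hfree⟩ I hI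
    have := hproj I hI
    exact I.exists_isCompl_of_projective (hfree _ inferInstance I hI)
end

section
/- A ring R is left Q-coregular (every left ideal of R is Q-copure) if and only if every Q-copure Baer injective left R-module is injective. -/
universe u

variable {R : Type u}

theorem coregular_iff_copureBaerInjective_injective [Ring R] (Q : ModuleCat.{u} R → Prop) :
    (∀ I : Ideal R, CopureIdeal Q I) ↔
      ∀ (M : Type u) [AddCommGroup M] [Module R M], CopureBaerInjective Q M →
        Module.Injective R M := by
  constructor
  · intro hI M _ _ hM
    apply Module.Baer.injective
    intro I g
    obtain ⟨h, hh⟩ := hM I (hI I) g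
    exact ⟨h, fun x mx => hh ⟨x, mx⟩⟩
  · intro H I M hQM g
    have hinj : Module.Injective R M := by
      apply H
      intro J hJ g'
      exact hJ M hQM g'
    obtain ⟨h, hh⟩ := hinj.out I.subtype Subtype.val_injective g
    exact ⟨h, hh⟩
end

section
/- If every Q-copure Baer injective left R-module is quasi-injective, then every Q-copure Baer injective left R-module is injective. -/
universe u

variable {R : Type u}

/-! If `M` is `Q`-copure Baer injective and `J` is an injective module containing `R`,
then `M × J` is again `Q`-copure Baer injective, hence quasi-injective by hypothesis. Extending
maps `(0, k) ↦ (g k, 0)` from submodules `0 × K` of `M × J` shows that `M` is injective relative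
to `J`, and restricting to ideals `I ⊆ R ⊆ J` gives Baer's criterion for `M`. -/

namespace CopureBaerInjective

variable [Ring R] {Q : ModuleCat.{u} R → Prop}

theorem of_injective (N : Type u) [AddCommGroup N] [Module R N] [Module.Injective R N] :
    CopureBaerInjective Q N := fun I _ g ↦
  Module.Baer.of_injective (inferInstance : Module.Injective R N) I g
    |>.imp fun _ h x ↦ h x x.2

theorem prod {M N : Type*} [AddCommGroup M] [Module R M] [AddCommGroup N] [Module R N]
    (hM : CopureBaerInjective Q M) (hN : CopureBaerInjective Q N) :
    CopureBaerInjective Q (M × N) := by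
  intro I hI g
  obtain ⟨f₁, hf₁⟩ := hM I hI (LinearMap.fst R M N ∘ₗ g)
  obtain ⟨f₂, hf₂⟩ := hN I hI (LinearMap.snd R M N ∘ₗ g)
  exact ⟨f₁.prod f₂, fun x ↦ Prod.ext (hf₁ x) (hf₂ x)⟩

end CopureBaerInjective

variable (R) in
def IsQuasiInjective [Ring R] (M : Type*) [AddCommGroup M] [Module R M] : Prop :=
  ∀ (N : Submodule R M) (g : N →ₗ[R] M), ∃ f : M →ₗ[R] M, ∀ x : N, f x = g x

section RelativeInjectivity

variable [Ring R] {M N : Type*} [AddCommGroup M] [Module R M] [AddCommGroup N] [Module R N]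

theorem IsQuasiInjective.exists_extension_of_prod (hMN : IsQuasiInjective R (M × N))
    (K : Submodule R N) (g : K →ₗ[R] M) : ∃ f : N →ₗ[R] M, ∀ x : K, f x = g x := by
  let S : Submodule R (M × N) := K.comap (LinearMap.snd R M N)
  let toK : S →ₗ[R] K := (LinearMap.snd R M N).restrict (p := S) fun _ hx ↦ hx
  obtain ⟨f, hf⟩ := hMN S (LinearMap.inl R M N ∘ₗ g ∘ₗ toK)
  refine ⟨LinearMap.fst R M N ∘ₗ f ∘ₗ LinearMap.inr R M N, fun x ↦ ?_⟩
  have hx : ((0 : M), (x : N)) ∈ S := x.2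
  exact congrArg Prod.fst (hf ⟨_, hx⟩)

theorem Module.Baer.of_exists_extension (ι : R →ₗ[R] N) (hι : Function.Injective ι)
    (hext : ∀ (K : Submodule R N) (g : K →ₗ[R] M), ∃ f : N →ₗ[R] M, ∀ x : K, f x = g x) :
    Module.Baer R M := by
  intro I g
  let e : I ≃ₗ[R] Submodule.map ι I := Submodule.equivMapOfInjective ι hι I
  obtain ⟨f, hf⟩ := hext (Submodule.map ι I) (g ∘ₗ e.symm.toLinearMap)
  refine ⟨f ∘ₗ ι, fun x hx ↦ ?_⟩
  have hfx := hf (e ⟨x, hx⟩)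
  simp only [LinearMap.comp_apply, LinearEquiv.coe_coe, LinearEquiv.symm_apply_apply] at hfx
  exact hfx

end RelativeInjectivity

theorem Module.exists_injective_linearMap_into_injective [Ring R] (N : Type u) [AddCommGroup N]
    [Module R N] : ∃ (J : ModuleCat.{u} R) (ι : N →ₗ[R] J),
      Module.Injective R J ∧ Function.Injective ι :=
  ⟨_, (CategoryTheory.Injective.ι (ModuleCat.of R N)).hom,
    Module.injective_module_of_injective_object R _
      (inj := CategoryTheory.Injective.injective_under _),
    (ModuleCat.mono_iff_injective _).mp inferInstance⟩

theorem injective_of_quasiInjective [Ring R] (Q : ModuleCat.{u} R → Prop)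
    (h : ∀ (M : Type u) [AddCommGroup M] [Module R M], CopureBaerInjective Q M →
      ∀ (N : Submodule R M) (g : N →ₗ[R] M), ∃ f : M →ₗ[R] M, ∀ x : N, f x = g x) :
    ∀ (M : Type u) [AddCommGroup M] [Module R M], CopureBaerInjective Q M →
      Module.Injective R M := by
  intro M _ _ hM
  obtain ⟨J, ι, hJ, hι⟩ := Module.exists_injective_linearMap_into_injective (R := R) R
  have hMJ : CopureBaerInjective Q (M × J) := hM.prod (.of_injective J)
  exact (Module.Baer.of_exists_extension ι hι
    (IsQuasiInjective.exists_extension_of_prod (h _ hMJ))).injective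
end
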